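/- Let $\alpha \in (1/4, 1]$, let $f : \mathbb{T} \to \mathbb{C}$ satisfy $|f(z)-f(w)| \le C|z-w|^{\alpha}$ for all $z,w \in \mathbb{T}$ and some constant $C>0$, let $K \subseteq \mathbb{T}$ be a nonempty compact set, and suppose $f(z)=0$ for every $z \in K$. Then for each $z \in K$, the function $f_z(w) = \frac{f(w)\,(\mathrm{dist}(w,K))^{\alpha}}{z-w}$ belongs to $L_2(\mathbb{T})$. -/

import Mathlib

/-!
Since `f` is `α`-Hölder on the circle and vanishes on the compact set `K`, comparing `w` with a
nearest point of `K` gives `|f w| ≤ C dist(w, K)^α`; for `z ∈ K` also `dist(w, K) ≤ |z - w|`, so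
`|f_z w| ≤ C |z - w|^(2α - 1)`. Its square `|z - w|^(4α - 2)` is integrable on the circle because
`4α - 2 > -1`: pulling back along `t ↦ exp (t i)`, Jordan's inequality
`|exp (s i) - exp (t i)| ≥ (2/π) |s - t|` for `|s - t| ≤ π` compares it with `|s - t|^(4α - 2)`.
Measurability of `f_z` comes from the continuity of `f` on the circle, which carries the measure.
-/

open MeasureTheory Set

/-- The normalized Lebesgue (Haar) measure on the unit circle, as a measure on `ℂ`. -/
noncomputable def circleMeasure : Measure ℂ :=
  (ENNReal.ofReal (2 * Real.pi))⁻¹ •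
    Measure.map (fun t : ℝ => Complex.exp (t * Complex.I))
      (volume.restrict (Ioc 0 (2 * Real.pi)))

open Complex Metric Filter Topology
open scoped Real

lemma continuousOn_of_norm_sub_le_mul_rpow {E F : Type*} [SeminormedAddCommGroup E]
    [SeminormedAddCommGroup F] {f : E → F} {s : Set E} {C α : ℝ} (hα : 0 < α)
    (hf : ∀ x ∈ s, ∀ y ∈ s, ‖f x - f y‖ ≤ C * ‖x - y‖ ^ α) : ContinuousOn f s := by
  intro y hy
  rw [ContinuousWithinAt, tendsto_iff_norm_sub_tendsto_zero]
  have hlim : Tendsto (fun x => C * ‖x - y‖ ^ α) (𝓝 y) (𝓝 0) := by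
    have : Continuous fun x => C * ‖x - y‖ ^ α := by fun_prop (disch := exact hα.le)
    simpa [Real.zero_rpow hα.ne'] using this.tendsto y
  exact squeeze_zero' (Eventually.of_forall fun _ => norm_nonneg _)
    (eventually_nhdsWithin_of_forall fun x hx => hf x hx y hy) (hlim.mono_left nhdsWithin_le_nhds)

lemma norm_le_mul_infDist_rpow {E F : Type*} [SeminormedAddCommGroup E]
    [SeminormedAddCommGroup F] {f : E → F} {s K : Set E} {C α : ℝ}
    (hf : ∀ x ∈ s, ∀ y ∈ s, ‖f x - f y‖ ≤ C * ‖x - y‖ ^ α) (hKs : K ⊆ s) (hK : IsCompact K)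
    (hKne : K.Nonempty) (hfK : ∀ y ∈ K, f y = 0) {x : E} (hx : x ∈ s) :
    ‖f x‖ ≤ C * infDist x K ^ α := by
  obtain ⟨y, hyK, hy⟩ := hK.exists_infDist_eq_dist hKne x
  simpa [hfK y hyK, hy, dist_eq_norm] using hf x hx y (hKs hyK)

lemma norm_mul_rpow_div_le {a z w : ℂ} {d C α : ℝ} (hC : 0 ≤ C) (hα : 0 < α) (hd : 0 ≤ d)
    (hdzw : d ≤ ‖z - w‖) (ha : ‖a‖ ≤ C * d ^ α) :
    ‖a * (d ^ α : ℝ) / (z - w)‖ ≤ C * ‖z - w‖ ^ (2 * α - 1) := by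
  rcases (norm_nonneg (z - w)).eq_or_lt with h0 | hpos
  · rw [norm_eq_zero.1 h0.symm, div_zero, norm_zero]
    positivity
  calc ‖a * (d ^ α : ℝ) / (z - w)‖ = ‖a‖ * d ^ α / ‖z - w‖ := by
        simp [abs_of_nonneg (Real.rpow_nonneg hd α)]
    _ ≤ C * d ^ α * d ^ α / ‖z - w‖ := by gcongr
    _ = C * d ^ (2 * α) / ‖z - w‖ := by
        rw [two_mul, Real.rpow_add' hd (by positivity)]; ring
    _ ≤ C * ‖z - w‖ ^ (2 * α) / ‖z - w‖ := by gcongr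
    _ = C * ‖z - w‖ ^ (2 * α - 1) := by rw [Real.rpow_sub hpos, Real.rpow_one]; ring

lemma two_div_pi_mul_abs_le_norm_exp_sub_exp {s t : ℝ} (h : |s - t| ≤ π) :
    2 / π * |s - t| ≤ ‖exp (s * I) - exp (t * I)‖ := by
  have hexp : exp (s * I) - exp (t * I) = exp (t * I) * (exp (I * ↑(s - t)) - 1) := by
    rw [mul_sub, ← Complex.exp_add]; push_cast; ring_nf
  have hsin := Real.mul_abs_le_abs_sin (x := (s - t) / 2) (by rw [abs_div, abs_two]; linarith)
  rw [abs_div, abs_two] at hsin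
  rw [hexp, norm_mul, norm_exp_ofReal_mul_I, one_mul, norm_exp_I_mul_ofReal_sub_one, norm_mul,
    Real.norm_two, Real.norm_eq_abs]
  linarith

lemma norm_exp_sub_exp_rpow_le {q s t : ℝ} (hq : q < 0) (h : |s - t| ≤ π) :
    ‖exp (s * I) - exp (t * I)‖ ^ q ≤ (2 / π) ^ q * |s - t| ^ q := by
  rcases eq_or_ne s t with rfl | hst
  · simp [Real.zero_rpow hq.ne]
  rw [← Real.mul_rpow (by positivity) (abs_nonneg _)]
  exact Real.rpow_le_rpow_of_nonpos (mul_pos (by positivity) (abs_pos.2 (sub_ne_zero.2 hst)))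
    (two_div_pi_mul_abs_le_norm_exp_sub_exp h) hq.le

lemma intervalIntegrable_abs_sub_rpow {q : ℝ} (hq : -1 < q) (c a b : ℝ) :
    IntervalIntegrable (fun t : ℝ => |t - c| ^ q) volume a b := by
  have hloc : LocallyIntegrable (fun x : ℝ => |x| ^ q) volume :=
    locallyIntegrable_of_norm_le_rpow (C := 1) (α := -q) (by simp) (by simp; linarith)
      (ae_of_all _ fun x => by simp [abs_of_nonneg (Real.rpow_nonneg (abs_nonneg x) q)])
      (by fun_prop : Measurable fun x : ℝ => |x| ^ q).aestronglyMeasurable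
  simpa using ((hloc.integrableOn_isCompact isCompact_uIcc).intervalIntegrable
    (a := a - c) (b := b - c)).comp_sub_right c

lemma integrable_circleMeasure_iff {E : Type*} [NormedAddCommGroup E] {g : ℂ → E}
    (hg : StronglyMeasurable g) :
    Integrable g circleMeasure ↔ IntegrableOn (fun t : ℝ => g (exp (t * I))) (Ioc 0 (2 * π)) := by
  rw [circleMeasure,
    integrable_smul_measure (ENNReal.inv_ne_zero.2 ENNReal.ofReal_ne_top) (by finiteness),
    integrable_map_measure hg.aestronglyMeasurable (by fun_prop)]
  rfl

lemma integrable_norm_sub_rpow_circleMeasure {q : ℝ} (hq : -1 < q) {z : ℂ} (hz : ‖z‖ = 1) :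
    Integrable (fun w : ℂ => ‖z - w‖ ^ q) circleMeasure := by
  have hmeas : Measurable fun w : ℂ => ‖z - w‖ ^ q := by fun_prop
  rw [integrable_circleMeasure_iff hmeas.stronglyMeasurable]
  rcases le_or_gt 0 q with hq0 | hq0
  · refine Integrable.mono' (integrableOn_const (C := (2 : ℝ) ^ q) measure_Ioc_lt_top.ne)
      (by fun_prop) (ae_of_all _ fun t => ?_)
    rw [Real.norm_of_nonneg (by positivity)]
    gcongr
    calc ‖z - exp (t * I)‖ ≤ ‖z‖ + ‖exp (t * I)‖ := norm_sub_le _ _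
      _ = 2 := by rw [hz, norm_exp_ofReal_mul_I]; norm_num
  obtain ⟨s, ⟨hs1, hs2⟩, rfl⟩ : ∃ s ∈ Ioc (-π) π, exp (s * I) = z :=
    ⟨arg z, ⟨neg_pi_lt_arg z, arg_le_pi z⟩, by simpa [hz] using norm_mul_exp_arg_mul_I z⟩
  have hint : ∀ c, IntegrableOn (fun t : ℝ => |t - c| ^ q) (Ioc 0 (2 * π)) := fun c =>
    (intervalIntegrable_iff_integrableOn_Ioc_of_le Real.two_pi_pos.le).1
      (intervalIntegrable_abs_sub_rpow hq c _ _)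
  refine Integrable.mono' (((hint s).add (hint (s + 2 * π))).const_mul ((2 / π) ^ q))
    (by fun_prop : Measurable _).aestronglyMeasurable
    ((ae_restrict_iff' measurableSet_Ioc).2 (ae_of_all _ fun t ⟨ht1, ht2⟩ => ?_))
  rw [Real.norm_of_nonneg (by positivity)]
  -- `z = exp (s i)` is also `exp ((s + 2π) i)`, and `t` is within `π` of `s` or of `s + 2π`.
  rcases le_or_gt (t - s) π with hts | hts
  · calc _ ≤ (2 / π) ^ q * |s - t| ^ q :=
          norm_exp_sub_exp_rpow_le hq0 (abs_le.2 ⟨by linarith, by linarith⟩)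
      _ ≤ _ := by
          rw [abs_sub_comm]
          gcongr
          exact le_add_of_nonneg_right (by positivity)
  · have hper : exp (s * I) = exp (↑(s + 2 * π) * I) := by
      rw [ofReal_add, add_mul, exp_add, ofReal_mul, ofReal_ofNat, exp_two_pi_mul_I, mul_one]
    calc _ ≤ (2 / π) ^ q * |s + 2 * π - t| ^ q := by
          rw [hper]
          exact norm_exp_sub_exp_rpow_le hq0 (abs_le.2 ⟨by linarith, by linarith⟩)
      _ ≤ _ := by
          rw [abs_sub_comm]
          gcongr
          exact le_add_of_nonneg_left (by positivity)

lemma memLp_norm_sub_rpow_circleMeasure {p : ENNReal} (hp0 : p ≠ 0) (hp : p ≠ ⊤) {q : ℝ}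
    (hq : -1 < q * p.toReal) {z : ℂ} (hz : ‖z‖ = 1) :
    MemLp (fun w : ℂ => ‖z - w‖ ^ q) p circleMeasure := by
  have hmeas : Measurable fun w : ℂ => ‖z - w‖ ^ q := by fun_prop
  refine (integrable_norm_rpow_iff hmeas.aestronglyMeasurable hp0 hp).1 ?_
  convert integrable_norm_sub_rpow_circleMeasure hq hz using 2 with w
  rw [Real.norm_of_nonneg (by positivity), ← Real.rpow_mul (norm_nonneg _)]

lemma ae_mem_sphere_circleMeasure : ∀ᵐ w ∂circleMeasure, w ∈ sphere (0 : ℂ) 1 :=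
  Measure.ae_smul_measure ((ae_map_iff (by fun_prop) isClosed_sphere.measurableSet).2
    (ae_of_all _ fun t => by simp [norm_exp_ofReal_mul_I])) _

lemma ContinuousOn.aestronglyMeasurable_circleMeasure {E : Type*} [TopologicalSpace E]
    [TopologicalSpace.PseudoMetrizableSpace E] {g : ℂ → E} (hg : ContinuousOn g (sphere 0 1)) :
    AEStronglyMeasurable g circleMeasure := by
  rw [← Measure.restrict_eq_self_of_ae_mem ae_mem_sphere_circleMeasure]
  exact hg.aestronglyMeasurable isClosed_sphere.measurableSet

theorem stmt_5_general (α : ℝ) (hα1 : 1/4 < α)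
    (f : ℂ → ℂ) (C : ℝ) (hC : 0 < C)
    (hHolder : ∀ z ∈ Metric.sphere (0:ℂ) 1, ∀ w ∈ Metric.sphere (0:ℂ) 1,
      ‖f z - f w‖ ≤ C * (‖z - w‖) ^ α)
    (K : Set ℂ) (hKsub : K ⊆ Metric.sphere (0:ℂ) 1)
    (hKcomp : IsCompact K) (hvanish : ∀ z ∈ K, f z = 0) :
    ∀ z ∈ K,
      MemLp (fun w : ℂ => f w * ((Metric.infDist w K : ℝ) ^ α : ℝ) / (z - w)) 2
        circleMeasure := by
  intro z hz
  have hα : 0 < α := by linarith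
  have hfK : ∀ w ∈ sphere (0 : ℂ) 1, ‖f w‖ ≤ C * infDist w K ^ α := fun w hw =>
    norm_le_mul_infDist_rpow hHolder hKsub hKcomp ⟨z, hz⟩ hvanish hw
  have hnum : ContinuousOn (fun w => f w * ((infDist w K ^ α : ℝ) : ℂ)) (sphere 0 1) :=
    (continuousOn_of_norm_sub_le_mul_rpow hα hHolder).mul <| continuous_ofReal.comp_continuousOn <|
      ((continuous_infDist_pt K).rpow_const fun _ => Or.inr hα.le).continuousOn
  have hmeas : AEStronglyMeasurable
      (fun w : ℂ => f w * ((infDist w K : ℝ) ^ α : ℝ) / (z - w)) circleMeasure :=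
    (hnum.aestronglyMeasurable_circleMeasure.aemeasurable.div (by fun_prop)).aestronglyMeasurable
  have hdom : MemLp (fun w : ℂ => C * ‖z - w‖ ^ (2 * α - 1)) 2 circleMeasure :=
    (memLp_norm_sub_rpow_circleMeasure two_ne_zero ENNReal.ofNat_ne_top (by norm_num; linarith)
      (by simpa using hKsub hz)).const_mul C
  refine hdom.mono' hmeas ?_
  filter_upwards [ae_mem_sphere_circleMeasure] with w hw
  exact norm_mul_rpow_div_le hC.le hα infDist_nonneg
    ((infDist_le_dist_of_mem hz).trans_eq (by rw [dist_comm, dist_eq_norm])) (hfK w hw)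

theorem stmt_5 (α : ℝ) (hα1 : 1/4 < α) (hα2 : α ≤ 1)
    (f : ℂ → ℂ) (C : ℝ) (hC : 0 < C)
    (hHolder : ∀ z ∈ Metric.sphere (0:ℂ) 1, ∀ w ∈ Metric.sphere (0:ℂ) 1,
      ‖f z - f w‖ ≤ C * (‖z - w‖) ^ α)
    (K : Set ℂ) (hKsub : K ⊆ Metric.sphere (0:ℂ) 1) (hKne : K.Nonempty)
    (hKcomp : IsCompact K) (hvanish : ∀ z ∈ K, f z = 0) :
    ∀ z ∈ K,
      MemLp (fun w : ℂ => f w * ((Metric.infDist w K : ℝ) ^ α : ℝ) / (z - w)) 2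
        circleMeasure :=
  stmt_5_general α hα1 f C hC hHolder K hKsub hKcomp hvanish
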